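/- arXiv:1001.1766 — 2 statements merged into one kernel-verified Lean document; each statement's English description precedes it below -/
import Mathlib

section
/- Let m ≥ 1 be an integer, x₀, …, x_m pairwise distinct complex numbers, n₀, …, n_m positive integers, and let P_ℓ(z) = (1/2πi) ∮_{C₀} e^{zζ}/∏_{j=0}^{m} (ζ + x_ℓ − x_j)^{n_j} dζ, where C₀ is a circle centered at 0 of radius strictly smaller than the minimal distance between two of the x_j. Set p_{ℓ,k} = P_ℓ^{(k)}(0) for 0 ≤ k ≤ n_ℓ − 1. Then p_{ℓ,k} = Σ_{γ ∈ Λ(ℓ,k)} ∏_{p=0, p≠ℓ}^{m} ( (−1)^{γ_p}/(x_ℓ − x_p)^{γ_p + n_p} · C(γ_p + n_p − 1, n_p − 1) ). In particular the leading coefficient p_{ℓ,n_ℓ−1}/(n_ℓ−1)! of P_ℓ equals (1/(n_ℓ−1)!)·∏_{p≠ℓ} (x_ℓ − x_p)^{−n_p}. -/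
/-- The Hermite integral
`P_ℓ(z) = (1/2πi) ∮_{C₀} e^{zζ} / ∏ⱼ (ζ + x_ℓ − x_j)^{n_j} dζ`
over the positively oriented circle `C₀` centered at `0` of radius `r₀`. -/
noncomputable def hermitePade (m : ℕ) (x : Fin (m + 1) → ℂ) (n : Fin (m + 1) → ℕ)
    (r₀ : ℝ) (ℓ : Fin (m + 1)) (z : ℂ) : ℂ :=
  (2 * Real.pi * Complex.I)⁻¹ *
    ∮ ζ in C(0, r₀), Complex.exp (z * ζ) / ∏ j, (ζ + x ℓ - x j) ^ (n j)

/-- `Λ(ℓ,k)`: the set of multi-indices `γ = (γ_p)_{p ≠ ℓ}` of nonnegative integers with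
`∑_{p ≠ ℓ} γ_p = n_ℓ − k − 1`, encoded as functions `γ : Fin (m+1) → ℕ` with `γ ℓ = 0`. -/
def lambdaSet (m : ℕ) (n : Fin (m + 1) → ℕ) (ℓ : Fin (m + 1)) (k : ℕ) :
    Finset (Fin (m + 1) → ℕ) :=
  (Finset.Nat.antidiagonalTuple (m + 1) (n ℓ - k - 1)).filter fun γ => γ ℓ = 0

/-!
On `C₀` the integrand equals `F_z(ζ) / ζ ^ n_ℓ` with
`F_z(ζ) = e^{zζ} ∏_{p ≠ ℓ} (ζ + x_ℓ - x_p)^{-n_p}`, and `F_z` is holomorphic on the closed disc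
bounded by `C₀` because its radius is smaller than every `|x_ℓ - x_p|`. By Cauchy's formula,
`P_ℓ(z)` is the coefficient of `ζ ^ (n_ℓ - 1)` in the Taylor series of `F_z`. Expanding each factor
`(ζ + a)^{-N}` by the negative binomial series and multiplying out the absolutely convergent series,
the coefficient `d_t` of `ζ ^ t` in the product is a sum over the multi-indices `γ` with `|γ| = t`,
and the Cauchy product with the exponential series gives
`P_ℓ(z) = ∑_{q < n_ℓ} d_{n_ℓ-1-q} z^q / q!`. So `P_ℓ^{(k)}(0) = d_{n_ℓ-1-k}`, which is the sum
over `Λ(ℓ,k)`.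
-/

open Finset Complex
open scoped Nat

section CauchyProduct

variable {ι R : Type*} [DecidableEq ι] [NormedCommRing R]

theorem sum_piAntidiag_cons_prod {i : ι} {s : Finset ι} (hi : i ∉ s) (f : ι → ℕ → R) (t : ℕ) :
    ∑ γ ∈ piAntidiag (cons i s hi) t, ∏ j ∈ cons i s hi, f j (γ j) =
      ∑ p ∈ antidiagonal t, f i p.1 * ∑ γ ∈ piAntidiag s p.2, ∏ j ∈ s, f j (γ j) := by
  rw [piAntidiag_cons, sum_disjiUnion]
  refine sum_congr rfl fun p _ => ?_
  rw [sum_map, mul_sum]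
  refine sum_congr rfl fun γ hγ => ?_
  have hγi : γ i = 0 := by
    by_contra h
    exact hi ((mem_piAntidiag.mp hγ).2 i h)
  rw [prod_cons]
  simp only [addRightEmbedding_apply, Pi.add_apply, if_pos, hγi, zero_add]
  congr 1
  refine prod_congr rfl fun j hj => ?_
  rw [if_neg (ne_of_mem_of_not_mem hj hi), add_zero]

theorem sum_piAntidiag_empty_prod (f : ι → ℕ → R) (t : ℕ) :
    ∑ γ ∈ piAntidiag (∅ : Finset ι) t, ∏ i ∈ ∅, f i (γ i) = if t = 0 then 1 else 0 := by
  rw [piAntidiag_empty]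
  split_ifs <;> simp

theorem summable_norm_sum_piAntidiag_prod (s : Finset ι) {f : ι → ℕ → R}
    (hf : ∀ i ∈ s, Summable fun n => ‖f i n‖) :
    Summable fun t => ‖∑ γ ∈ piAntidiag s t, ∏ i ∈ s, f i (γ i)‖ := by
  induction s using Finset.cons_induction with
  | empty =>
    simp only [sum_piAntidiag_empty_prod]
    exact summable_of_ne_finset_zero (s := {0}) fun t ht => by simp_all
  | cons i s hi ih =>
    refine (summable_norm_sum_mul_antidiagonal_of_summable_norm (hf i (mem_cons_self i s))
      (ih fun j hj => hf j (mem_cons_of_mem hj))).congr fun t => ?_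
    rw [sum_piAntidiag_cons_prod hi]

variable [CompleteSpace R]

theorem hasSum_sum_piAntidiag_prod (s : Finset ι) {f : ι → ℕ → R}
    (hf : ∀ i ∈ s, Summable fun n => ‖f i n‖) :
    HasSum (fun t => ∑ γ ∈ piAntidiag s t, ∏ i ∈ s, f i (γ i)) (∏ i ∈ s, ∑' n, f i n) := by
  induction s using Finset.cons_induction with
  | empty =>
    rw [prod_empty, funext (sum_piAntidiag_empty_prod f)]
    exact hasSum_ite_eq 0 1
  | cons i s hi ih =>
    have hfi := hf i (mem_cons_self i s)
    have hfs : ∀ j ∈ s, Summable fun n => ‖f j n‖ := fun j hj => hf j (mem_cons_of_mem hj)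
    have hnorm := summable_norm_sum_piAntidiag_prod s hfs
    rw [funext (sum_piAntidiag_cons_prod hi f), prod_cons, ← (ih hfs).tsum_eq,
      tsum_mul_tsum_eq_tsum_sum_antidiagonal_of_summable_norm hfi hnorm]
    exact (summable_norm_sum_mul_antidiagonal_of_summable_norm hfi hnorm).of_norm.hasSum

end CauchyProduct

theorem sum_piAntidiag_prod_mul_pow {ι R : Type*} [DecidableEq ι] [CommSemiring R]
    (s : Finset ι) (c : ι → ℕ → R) (w : R) (t : ℕ) :
    ∑ γ ∈ piAntidiag s t, ∏ i ∈ s, c i (γ i) * w ^ (γ i) =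
      (∑ γ ∈ piAntidiag s t, ∏ i ∈ s, c i (γ i)) * w ^ t := by
  rw [sum_mul]
  refine sum_congr rfl fun γ hγ => ?_
  rw [prod_mul_distrib, prod_pow_eq_pow_sum, (mem_piAntidiag.mp hγ).1]

section NegativeBinomial

variable {𝕜 : Type*} [RCLike 𝕜]

def negBinomCoeff (a : 𝕜) (N γ : ℕ) : 𝕜 :=
  (-1) ^ γ / a ^ (γ + N) * ((γ + N - 1).choose (N - 1) : 𝕜)

variable {a w : 𝕜} {N : ℕ}

theorem negBinomCoeff_mul_pow (ha : a ≠ 0) (hN : 1 ≤ N) (γ : ℕ) :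
    negBinomCoeff a N γ * w ^ γ = (a ^ N)⁻¹ * ((γ + (N - 1)).choose (N - 1) * (-w / a) ^ γ) := by
  rw [negBinomCoeff, show γ + N - 1 = γ + (N - 1) by omega, div_pow, neg_pow w]
  field_simp
  ring

theorem summable_norm_negBinomCoeff_mul_pow (hN : 1 ≤ N) (hw : ‖w‖ < ‖a‖) :
    Summable fun γ => ‖negBinomCoeff a N γ * w ^ γ‖ := by
  have ha : a ≠ 0 := norm_pos_iff.mp ((norm_nonneg w).trans_lt hw)
  have hr : ‖‖-w / a‖‖ < 1 := by
    rwa [norm_norm, norm_div, norm_neg, div_lt_one (norm_pos_iff.mpr ha)]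
  refine ((summable_choose_mul_geometric_of_norm_lt_one (N - 1) hr).mul_left ‖(a ^ N)⁻¹‖).congr
    fun γ => ?_
  simp [negBinomCoeff_mul_pow ha hN, norm_mul, norm_pow]

theorem hasSum_negBinomCoeff_mul_pow (hN : 1 ≤ N) (hw : ‖w‖ < ‖a‖) :
    HasSum (fun γ => negBinomCoeff a N γ * w ^ γ) ((w + a) ^ N)⁻¹ := by
  have ha : a ≠ 0 := norm_pos_iff.mp ((norm_nonneg w).trans_lt hw)
  have hr : ‖-w / a‖ < 1 := by rwa [norm_div, norm_neg, div_lt_one (norm_pos_iff.mpr ha)]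
  have := (hasSum_choose_mul_geometric_of_norm_lt_one (N - 1) hr).mul_left (a ^ N)⁻¹
  rw [Nat.sub_add_cancel hN] at this
  have hsum : (a ^ N)⁻¹ * (1 / (1 - -w / a) ^ N) = ((w + a) ^ N)⁻¹ := by
    rw [neg_div, sub_neg_eq_add, one_add_div ha, div_pow, one_div_div, add_comm]
    field_simp
  rwa [funext (negBinomCoeff_mul_pow ha hN), ← hsum]

end NegativeBinomial

section ProdInvAddPow

variable {ι 𝕜 : Type*} [DecidableEq ι] [RCLike 𝕜]

def prodInvAddPowCoeff (s : Finset ι) (a : ι → 𝕜) (n : ι → ℕ) (t : ℕ) : 𝕜 :=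
  ∑ γ ∈ piAntidiag s t, ∏ i ∈ s, negBinomCoeff (a i) (n i) (γ i)

variable {s : Finset ι} {a : ι → 𝕜} {n : ι → ℕ} {w : 𝕜}

theorem prodInvAddPowCoeff_zero : prodInvAddPowCoeff s a n 0 = ∏ i ∈ s, (a i ^ n i)⁻¹ := by
  simp [prodInvAddPowCoeff, negBinomCoeff]

theorem summable_norm_prodInvAddPowCoeff_mul_pow (hn : ∀ i ∈ s, 1 ≤ n i)
    (hw : ∀ i ∈ s, ‖w‖ < ‖a i‖) :
    Summable fun t => ‖prodInvAddPowCoeff s a n t * w ^ t‖ := by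
  refine (summable_norm_sum_piAntidiag_prod s (f := fun i γ => negBinomCoeff (a i) (n i) γ * w ^ γ)
    fun i hi => summable_norm_negBinomCoeff_mul_pow (hn i hi) (hw i hi)).congr fun t => ?_
  rw [sum_piAntidiag_prod_mul_pow, prodInvAddPowCoeff]

theorem hasSum_prodInvAddPowCoeff_mul_pow (hn : ∀ i ∈ s, 1 ≤ n i)
    (hw : ∀ i ∈ s, ‖w‖ < ‖a i‖) :
    HasSum (fun t => prodInvAddPowCoeff s a n t * w ^ t) (∏ i ∈ s, ((w + a i) ^ n i)⁻¹) := by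
  have := hasSum_sum_piAntidiag_prod s (f := fun i γ => negBinomCoeff (a i) (n i) γ * w ^ γ)
    fun i hi => summable_norm_negBinomCoeff_mul_pow (hn i hi) (hw i hi)
  rwa [prod_congr rfl fun i hi => (hasSum_negBinomCoeff_mul_pow (hn i hi) (hw i hi)).tsum_eq,
    funext (sum_piAntidiag_prod_mul_pow s _ w)] at this

end ProdInvAddPow

theorem hasSum_cexp_mul {d : ℕ → ℂ} {g z w : ℂ} (hd : Summable fun t => ‖d t * w ^ t‖)
    (hg : HasSum (fun t => d t * w ^ t) g) :
    HasSum (fun u => (∑ q ∈ range (u + 1), d (u - q) / q ! * z ^ q) * w ^ u)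
      (exp (z * w) * g) := by
  have hexp : HasSum (fun q => z ^ q / q ! * w ^ q) (exp (z * w)) := by
    have hterm : ∀ q : ℕ, (z * w) ^ q / q ! = z ^ q / q ! * w ^ q := fun q => by ring
    simpa only [exp_eq_exp_ℂ, hterm] using NormedSpace.expSeries_div_hasSum_exp (z * w)
  have hexp_norm : Summable fun q => ‖z ^ q / q ! * w ^ q‖ := by
    refine (Real.summable_pow_div_factorial ‖z * w‖).congr fun q => ?_
    simp only [Complex.norm_mul, mul_pow, Complex.norm_div, norm_pow, RCLike.norm_natCast]
    ring
  have hterm : ∀ u, ∑ q ∈ range (u + 1), z ^ q / q ! * w ^ q * (d (u - q) * w ^ (u - q)) =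
      (∑ q ∈ range (u + 1), d (u - q) / q ! * z ^ q) * w ^ u := by
    intro u
    rw [sum_mul]
    refine sum_congr rfl fun q hq => ?_
    rw [mul_mul_mul_comm, ← pow_add, Nat.add_sub_cancel' (Nat.lt_succ_iff.mp (mem_range.mp hq))]
    ring
  rw [← funext hterm, ← hexp.tsum_eq, ← hg.tsum_eq,
    tsum_mul_tsum_eq_tsum_sum_range_of_summable_norm hexp_norm hd]
  exact (summable_norm_sum_mul_range_of_summable_norm hexp_norm hd).of_norm.hasSum

theorem iteratedDeriv_sum_mul_pow_zero {𝕜 : Type*} [NontriviallyNormedField 𝕜]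
    [CharZero 𝕜] (c : ℕ → 𝕜) {k M : ℕ} (hk : k < M) :
    iteratedDeriv k (fun z => ∑ q ∈ range M, c q / q ! * z ^ q) 0 = c k := by
  rw [iteratedDeriv_fun_sum fun q _ => by fun_prop]
  simp only [iteratedDeriv_const_mul_field, iteratedDeriv_fun_pow_zero]
  rw [sum_eq_single_of_mem k (mem_range.mpr hk) fun q _ hq => by simp [Ne.symm hq]]
  simp [Nat.factorial_ne_zero]

theorem add_ne_zero_of_norm_lt {E : Type*} [SeminormedAddGroup E] {w a : E} (h : ‖w‖ < ‖a‖) :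
    w + a ≠ 0 := fun hwa => by
  rw [eq_neg_of_add_eq_zero_left hwa, norm_neg] at h
  exact h.false

theorem circleIntegral_div_pow_succ_eq_of_hasSum {f : ℂ → ℂ} {a : ℕ → ℂ} {R : ℝ} (hR : 0 < R)
    (hf : DifferentiableOn ℂ f (Metric.closedBall 0 R))
    (ha : ∀ᶠ ζ in nhds 0, HasSum (fun t => a t * ζ ^ t) (f ζ)) (k : ℕ) :
    (2 * Real.pi * I)⁻¹ * ∮ ζ in C(0, R), f ζ / ζ ^ (k + 1) = a k := by
  lift R to NNReal using hR.le
  have hcauchy := (hf.hasFPowerSeriesOnBall (by exact_mod_cast hR)).hasFPowerSeriesAt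
  have hseries : HasFPowerSeriesAt f (FormalMultilinearSeries.ofScalars ℂ a) 0 := by
    rw [hasFPowerSeriesAt_iff]
    filter_upwards [ha] with ζ hζ
    simpa [mul_comm] using hζ
  have := congr_arg (·.coeff k) (hcauchy.eq_formalMultilinearSeries hseries)
  simp only [FormalMultilinearSeries.coeff_ofScalars] at this
  rw [← this, FormalMultilinearSeries.coeff, Pi.one_def, cauchyPowerSeries_apply, smul_eq_mul]
  simp only [sub_zero, smul_eq_mul, pow_succ, div_eq_mul_inv, one_mul, mul_inv, inv_pow]
  congr 2
  ext ζ
  ring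

theorem lambdaSet_eq_piAntidiag (m : ℕ) (n : Fin (m + 1) → ℕ) (ℓ : Fin (m + 1)) (k : ℕ) :
    lambdaSet m n ℓ k = piAntidiag (univ.erase ℓ) (n ℓ - k - 1) := by
  ext γ
  simp only [lambdaSet, mem_filter, Nat.mem_antidiagonalTuple, mem_piAntidiag, mem_erase,
    mem_univ, and_true]
  constructor
  · rintro ⟨hsum, hℓ⟩
    refine ⟨?_, fun i hi hiℓ => hi (hiℓ ▸ hℓ)⟩
    rw [← hsum, ← add_sum_erase univ γ (mem_univ ℓ), hℓ, zero_add]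
  · rintro ⟨hsum, hsupp⟩
    have hℓ : γ ℓ = 0 := by
      by_contra h
      exact hsupp ℓ h rfl
    refine ⟨?_, hℓ⟩
    rw [← hsum, ← add_sum_erase univ γ (mem_univ ℓ), hℓ, zero_add]

theorem exp_div_prod_eq {m : ℕ} (x : Fin (m + 1) → ℂ) (n : Fin (m + 1) → ℕ) (ℓ : Fin (m + 1))
    (z ζ : ℂ) :
    exp (z * ζ) / ∏ j, (ζ + x ℓ - x j) ^ n j =
      (exp (z * ζ) * ∏ p ∈ univ.erase ℓ, ((ζ + (x ℓ - x p)) ^ n p)⁻¹) / ζ ^ n ℓ := by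
  rw [← mul_prod_erase univ _ (mem_univ ℓ), add_sub_cancel_right, prod_inv_distrib,
    div_eq_mul_inv, mul_inv]
  simp only [add_sub_assoc]
  ring

theorem hermitePade_eq_sum {m : ℕ} {x : Fin (m + 1) → ℂ} {n : Fin (m + 1) → ℕ}
    (hn : ∀ j, 1 ≤ n j) {r₀ : ℝ} (hr₀ : 0 < r₀) (hr₀' : ∀ i j, i ≠ j → r₀ < dist (x i) (x j))
    (ℓ : Fin (m + 1)) (z : ℂ) :
    hermitePade m x n r₀ ℓ z = ∑ q ∈ range (n ℓ),
      prodInvAddPowCoeff (univ.erase ℓ) (fun p => x ℓ - x p) n (n ℓ - 1 - q) / q ! * z ^ q := by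
  have hsep : ∀ ζ : ℂ, ‖ζ‖ ≤ r₀ → ∀ p ∈ univ.erase ℓ, ‖ζ‖ < ‖x ℓ - x p‖ := fun ζ hζ p hp =>
    hζ.trans_lt (dist_eq_norm (x ℓ) (x p) ▸ hr₀' ℓ p (ne_of_mem_erase hp).symm)
  have hdiff : DifferentiableOn ℂ
      (fun ζ => exp (z * ζ) * ∏ p ∈ univ.erase ℓ, ((ζ + (x ℓ - x p)) ^ n p)⁻¹)
      (Metric.closedBall 0 r₀) := by
    refine DifferentiableOn.mul (by fun_prop) (DifferentiableOn.fun_finsetProd fun p hp =>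
      DifferentiableOn.inv (by fun_prop) fun ζ hζ => pow_ne_zero _ ?_)
    exact add_ne_zero_of_norm_lt (hsep ζ (mem_closedBall_zero_iff.mp hζ) p hp)
  have hseries : ∀ᶠ ζ in nhds 0, HasSum
      (fun u => (∑ q ∈ range (u + 1),
        prodInvAddPowCoeff (univ.erase ℓ) (fun p => x ℓ - x p) n (u - q) / q ! * z ^ q) * ζ ^ u)
      (exp (z * ζ) * ∏ p ∈ univ.erase ℓ, ((ζ + (x ℓ - x p)) ^ n p)⁻¹) := by
    filter_upwards [Metric.ball_mem_nhds 0 hr₀] with ζ hζ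
    have hζ' := hsep ζ (mem_ball_zero_iff.mp hζ).le
    exact hasSum_cexp_mul
      (summable_norm_prodInvAddPowCoeff_mul_pow (fun p _ => hn p) hζ')
      (hasSum_prodInvAddPowCoeff_mul_pow (fun p _ => hn p) hζ')
  rw [hermitePade, funext (exp_div_prod_eq x n ℓ z), ← Nat.sub_add_cancel (hn ℓ),
    circleIntegral_div_pow_succ_eq_of_hasSum hr₀ hdiff hseries, Nat.add_sub_cancel]

theorem stmt7_general (m : ℕ) (x : Fin (m + 1) → ℂ)
    (n : Fin (m + 1) → ℕ) (hn : ∀ j, 1 ≤ n j)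
    (r₀ : ℝ) (hr₀ : 0 < r₀) (hr₀' : ∀ i j, i ≠ j → r₀ < dist (x i) (x j))
    (ℓ : Fin (m + 1)) :
    (∀ k, k ≤ n ℓ - 1 →
      iteratedDeriv k (hermitePade m x n r₀ ℓ) 0 =
        ∑ γ ∈ lambdaSet m n ℓ k, ∏ p ∈ Finset.univ.erase ℓ,
          ((-1) ^ (γ p) / (x ℓ - x p) ^ (γ p + n p) *
            ((γ p + n p - 1).choose (n p - 1) : ℂ))) ∧
    iteratedDeriv (n ℓ - 1) (hermitePade m x n r₀ ℓ) 0 / ((n ℓ - 1).factorial : ℂ) =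
      ((n ℓ - 1).factorial : ℂ)⁻¹ * ∏ p ∈ Finset.univ.erase ℓ, ((x ℓ - x p) ^ (n p))⁻¹ := by
  have hderiv : ∀ k ≤ n ℓ - 1, iteratedDeriv k (hermitePade m x n r₀ ℓ) 0 =
      prodInvAddPowCoeff (univ.erase ℓ) (fun p => x ℓ - x p) n (n ℓ - 1 - k) := by
    intro k hk
    rw [funext (hermitePade_eq_sum hn hr₀ hr₀' ℓ)]
    exact iteratedDeriv_sum_mul_pow_zero _ (by have := hn ℓ; omega)
  refine ⟨fun k hk => ?_, ?_⟩
  · rw [hderiv k hk, lambdaSet_eq_piAntidiag, show n ℓ - k - 1 = n ℓ - 1 - k by omega]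
    rfl
  · rw [hderiv _ le_rfl, Nat.sub_self, prodInvAddPowCoeff_zero, div_eq_inv_mul]

theorem stmt7 (m : ℕ) (hm : 1 ≤ m) (x : Fin (m + 1) → ℂ) (hx : Function.Injective x)
    (n : Fin (m + 1) → ℕ) (hn : ∀ j, 1 ≤ n j)
    (r₀ : ℝ) (hr₀ : 0 < r₀) (hr₀' : ∀ i j, i ≠ j → r₀ < dist (x i) (x j))
    (ℓ : Fin (m + 1)) :
    (∀ k, k ≤ n ℓ - 1 →
      iteratedDeriv k (hermitePade m x n r₀ ℓ) 0 =
        ∑ γ ∈ lambdaSet m n ℓ k, ∏ p ∈ Finset.univ.erase ℓ,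
          ((-1) ^ (γ p) / (x ℓ - x p) ^ (γ p + n p) *
            ((γ p + n p - 1).choose (n p - 1) : ℂ))) ∧
    iteratedDeriv (n ℓ - 1) (hermitePade m x n r₀ ℓ) 0 / ((n ℓ - 1).factorial : ℂ) =
      ((n ℓ - 1).factorial : ℂ)⁻¹ * ∏ p ∈ Finset.univ.erase ℓ, ((x ℓ - x p) ^ (n p))⁻¹ :=
  stmt7_general m x n hn r₀ hr₀ hr₀' ℓ
end

section
/- Let α, β be nonzero algebraic numbers, K ≥ 1, L ≥ 2 integers, and let μ ≤ L−2 be the smallest natural number with δ^μ ℋ(β,α) ≠ 0. Let P = ∏_p |M₀|_p = 1/gcd of the maximal minors of M₀, and define G₁(X,Y) = d_μ^{K−1}·P·ℱ_μ(δ)(ℋ(X,Y)), where ℱ_μ(δ) = δ(δ−1)⋯(δ−μ+1)/μ! (and ℱ₀(δ) = 1, d_0 = 1). Then G₁ has integer coefficients, G₁(β,α) = (d_μ^{K−1}/μ!)·P·δ^μℋ(β,α), and G₁(β,α) ≠ 0. -/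
open MvPolynomial

/-- The derivation `δ = ∂/∂X + Y ∂/∂Y` on `ℚ[X,Y]` (`X` is variable `0`, `Y` is variable `1`). -/
noncomputable def deltaQ (P : MvPolynomial (Fin 2) ℚ) : MvPolynomial (Fin 2) ℚ :=
  pderiv 0 P + X 1 * pderiv 1 P

/-- The operator `ℱ_μ(δ) = δ(δ−1)⋯(δ−μ+1)/μ!` (with `ℱ₀(δ) = 1`). -/
noncomputable def feldOp (μ : ℕ) (P : MvPolynomial (Fin 2) ℚ) : MvPolynomial (Fin 2) ℚ :=
  (μ.factorial : ℚ)⁻¹ • (List.range μ).foldl (fun Q i => deltaQ Q - (i : ℚ) • Q) P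

/-- The `(s,(k,ℓ))` entry of `M₀`: the `s`-th derivative of `z^k e^{ℓz}` at `0`, namely
`C(s,k) k! ℓ^{s−k}` if `k ≤ s` and `0` otherwise (with `0^0 = 1`). -/
def m0Entry (s k ℓ : ℕ) : ℕ :=
  if k ≤ s then s.choose k * k.factorial * ℓ ^ (s - k) else 0

/-- The `(S−1) × S` integer matrix `M₀` (`S = KL`, written with row type `Fin S'` and column
type `Fin (S'+1)` where `S' + 1 = K*L`); columns indexed by pairs `(k,ℓ)` via
`finProdFinEquiv`. -/
def m0Int (K L S' : ℕ) (h : S' + 1 = K * L) : Matrix (Fin S') (Fin (S' + 1)) ℤ :=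
  Matrix.of fun s j =>
    let kl : Fin K × Fin L := finProdFinEquiv.symm (Fin.cast h j)
    ((m0Entry (s : ℕ) (kl.1 : ℕ) (kl.2 : ℕ) : ℕ) : ℤ)

/-- `Δ_{k,ℓ}`: the maximal minor of `M₀` obtained by deleting the column indexed by `(k,ℓ)`. -/
def m0Minor (K L S' : ℕ) (h : S' + 1 = K * L) (j : Fin (S' + 1)) : ℤ :=
  ((m0Int K L S' h).submatrix id j.succAbove).det

/-- `ℋ(X,Y) ∈ ℚ[X,Y]`: determinant of the `S×S` matrix obtained by appending to `M₀` the row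
`(X^k Y^ℓ)_{k,ℓ}`. -/
noncomputable def HpolyQ (K L S' : ℕ) (h : S' + 1 = K * L) : MvPolynomial (Fin 2) ℚ :=
  Matrix.det (Matrix.of fun i j : Fin (S' + 1) =>
    let kl : Fin K × Fin L := finProdFinEquiv.symm (Fin.cast h j)
    if (i : ℕ) < S' then ((m0Entry (i : ℕ) (kl.1 : ℕ) (kl.2 : ℕ) : ℕ) : MvPolynomial (Fin 2) ℚ)
    else X 0 ^ (kl.1 : ℕ) * X 1 ^ (kl.2 : ℕ))

/-- `d_n = lcm(1, …, n)` (with `d_0 = 1`). -/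
def dlcm (n : ℕ) : ℕ := (Finset.Icc 1 n).lcm id

/-- `G₁(X,Y) = d_μ^{K−1} · P · ℱ_μ(δ)(ℋ(X,Y))` where
`P = ∏_p |M₀|_p = 1/gcd` of the maximal minors of `M₀`. -/
noncomputable def G1 (K L S' : ℕ) (h : S' + 1 = K * L) (μ : ℕ) : MvPolynomial (Fin 2) ℚ :=
  ((dlcm μ : ℚ) ^ (K - 1) * ((Finset.gcd Finset.univ (m0Minor K L S' h) : ℤ) : ℚ)⁻¹) •
    feldOp μ (HpolyQ K L S' h)

/-!
`ℱ_μ(δ) = (δ)_μ / μ!` with `(δ)_μ = δ(δ-1)⋯(δ-μ+1)` monic of degree `μ` in `δ`. At `(β, α)` all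
`δ^j ℋ` with `j < μ` vanish, so only the leading term `δ^μ ℋ` survives; it is nonzero, hence so
is `ℋ` and therefore the gcd of the minors, which are (up to sign) the coefficients of `ℋ`.

For integrality, write `δ = ∂_X + Y∂_Y` as a sum of commuting operators, so that Chu–Vandermonde
gives `(δ)_μ = ∑ C(μ,i) (∂_X)_i (Y∂_Y)_{μ-i}`. On `X^k Y^ℓ`, `(Y∂_Y)_j` acts by `ℓ^{(j)}`, divisible
by `j!`, while `(∂_X)_i` yields `s(i,ν) k^{(ν)} X^{k-ν} Y^ℓ` with `s(i,ν)` the coefficients of the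
falling factorial. By Vieta, `i! ∣ d_i^ν s(i,ν)`, and `ν ≤ k ≤ K - 1`, so `d_μ^{K-1}` clears all
denominators once `ℋ` is divided by the gcd of its coefficients.
-/

open Finset

lemma dlcm_ne_zero (n : ℕ) : dlcm n ≠ 0 := by
  simp [dlcm, Finset.lcm_eq_zero_iff]

lemma dvd_dlcm {i n : ℕ} (h1 : 1 ≤ i) (h2 : i ≤ n) : i ∣ dlcm n :=
  Finset.dvd_lcm (Finset.mem_Icc.mpr ⟨h1, h2⟩)

lemma dlcm_dvd_dlcm {m n : ℕ} (h : m ≤ n) : dlcm m ∣ dlcm n :=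
  Finset.lcm_dvd fun _ hi => dvd_dlcm (Finset.mem_Icc.mp hi).1 ((Finset.mem_Icc.mp hi).2.trans h)

/-- With `U` the complement of `T` in `{1, …, n}`, `(n + 1)! = (n + 1) * ∏ T * ∏ U`, and `n + 1`
as well as each of the `n - #T` elements of `U` divides `dlcm (n + 1)`. -/
lemma factorial_succ_dvd_dlcm_pow_mul_prod {n : ℕ} {T : Finset ℕ} (hT : T ⊆ Finset.Ico 1 (n + 1)) :
    (n + 1).factorial ∣ dlcm (n + 1) ^ (n + 1 - T.card) * ∏ i ∈ T, i := by
  set U := Finset.Ico 1 (n + 1) \ T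
  have hprod : (∏ i ∈ T, i) * ∏ i ∈ U, i = n.factorial := by
    rw [mul_comm, Finset.prod_sdiff hT, Finset.prod_Ico_id_eq_factorial]
  have hU : ∏ i ∈ U, i ∣ dlcm (n + 1) ^ U.card := by
    rw [← Finset.prod_const]
    refine Finset.prod_dvd_prod_of_dvd _ _ fun u hu => ?_
    have hu' := Finset.mem_Ico.mp (Finset.mem_sdiff.mp hu).1
    exact dvd_dlcm hu'.1 hu'.2.le
  have hcard : n + 1 - T.card = U.card + 1 := by
    have hTcard := Finset.card_le_card hT
    rw [Nat.card_Ico] at hTcard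
    rw [Finset.card_sdiff_of_subset hT, Nat.card_Ico]
    omega
  calc (n + 1).factorial = (n + 1) * ((∏ i ∈ T, i) * ∏ i ∈ U, i) := by
        rw [hprod, Nat.factorial_succ]
    _ ∣ dlcm (n + 1) * ((∏ i ∈ T, i) * dlcm (n + 1) ^ U.card) :=
        mul_dvd_mul (dvd_dlcm le_add_self le_rfl) (mul_dvd_mul_left _ hU)
    _ = dlcm (n + 1) ^ (n + 1 - T.card) * ∏ i ∈ T, i := by
        rw [hcard]
        ring

lemma descPochhammer_int_eq_prod_range (n : ℕ) :
    descPochhammer ℤ n = ∏ i ∈ Finset.range n, (Polynomial.X + Polynomial.C (-(i : ℤ))) := by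
  induction n with
  | zero => simp
  | succ n ih => simp [descPochhammer_succ_right, Finset.prod_range_succ, ih, sub_eq_add_neg]

/-- By Vieta, the coefficient is a sum of terms `± ∏ T` with `T ⊆ {0, …, j - 1}` of size
`j - ν`. -/
lemma factorial_dvd_dlcm_pow_mul_coeff_descPochhammer (j ν : ℕ) :
    (j.factorial : ℤ) ∣ dlcm j ^ ν * (descPochhammer ℤ j).coeff ν := by
  rcases lt_or_ge j ν with hjν | hνj
  · rw [Polynomial.coeff_eq_zero_of_natDegree_lt (by rwa [descPochhammer_natDegree]), mul_zero]
    exact dvd_zero _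
  obtain _ | n := j
  · simp
  rw [descPochhammer_int_eq_prod_range, Finset.prod_X_add_C_coeff _ _ (by simpa using hνj),
    Finset.mul_sum]
  refine Finset.dvd_sum fun T hT => ?_
  obtain ⟨hT, hcard⟩ := Finset.mem_powersetCard.mp hT
  rw [Finset.prod_neg, mul_left_comm]
  by_cases h0 : 0 ∈ T
  · simp [Finset.prod_eq_zero h0]
  have hT' : T ⊆ Finset.Ico 1 (n + 1) := fun i hi =>
    Finset.mem_Ico.mpr
      ⟨Nat.pos_of_ne_zero (ne_of_mem_of_not_mem hi h0), Finset.mem_range.mp (hT hi)⟩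
  have := Int.natCast_dvd_natCast.mpr (factorial_succ_dvd_dlcm_pow_mul_prod hT')
  rw [Finset.card_range] at hcard
  rw [hcard, Nat.sub_sub_self hνj] at this
  push_cast at this
  exact this.mul_left _

noncomputable def partialX : Module.End ℚ (MvPolynomial (Fin 2) ℚ) :=
  (pderiv 0 : Derivation ℚ (MvPolynomial (Fin 2) ℚ) _).toLinearMap

noncomputable def eulerY : Module.End ℚ (MvPolynomial (Fin 2) ℚ) :=
  LinearMap.mulLeft ℚ (X 1) ∘ₗ (pderiv 1 : Derivation ℚ (MvPolynomial (Fin 2) ℚ) _).toLinearMap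

noncomputable def delta : Module.End ℚ (MvPolynomial (Fin 2) ℚ) := partialX + eulerY

lemma coe_delta : ⇑delta = deltaQ := rfl

lemma commute_partialX_eulerY : Commute partialX eulerY := by
  refine linearMap_ext fun m => LinearMap.ext_ring ?_
  simp [partialX, eulerY, pderiv_monomial, tsub_right_comm, mul_comm]

lemma feldOp_eq_smul_aeval_descPochhammer (μ : ℕ) (P : MvPolynomial (Fin 2) ℚ) :
    feldOp μ P = (μ.factorial : ℚ)⁻¹ • Polynomial.aeval delta (descPochhammer ℤ μ) P := by
  unfold feldOp
  congr 1
  induction μ with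
  | zero => simp
  | succ μ ih =>
    simp only [List.pure_def, List.bind_eq_flatMap, List.range_succ, List.flatMap_append,
      List.flatMap_cons, List.flatMap_nil, List.append_nil, List.foldl_append, List.foldl_cons,
      List.foldl_nil] at ih ⊢
    rw [ih, descPochhammer_succ_right, mul_comm, map_mul]
    simp [coe_delta, Nat.cast_smul_eq_nsmul, nsmul_eq_mul]

lemma aeval_delta_descPochhammer (μ : ℕ) :
    Polynomial.aeval delta (descPochhammer ℤ μ) =
      ∑ ij ∈ antidiagonal μ, (μ.choose ij.1 : Module.End ℚ _) *
        (Polynomial.aeval partialX (descPochhammer ℤ ij.1) *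
          Polynomial.aeval eulerY (descPochhammer ℤ ij.2)) := by
  simp only [Polynomial.aeval_eq_smeval]
  exact Ring.descPochhammer_smeval_add μ commute_partialX_eulerY

lemma aeval_apply_of_apply_eq_smul {R M : Type*} [CommRing R] [AddCommGroup M] [Module R M]
    {f : Module.End R M} {v : M} {c : ℤ} (h : f v = c • v) (p : Polynomial ℤ) :
    Polynomial.aeval f p v = p.eval c • v := by
  have hpow (n : ℕ) : (f ^ n) v = c ^ n • v := by
    induction n with
    | zero => simp
    | succ n ih => rw [pow_succ', Module.End.mul_apply, ih, map_zsmul, h, smul_smul, pow_succ]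
  induction p using Polynomial.induction_on' with
  | add p q hp hq => simp only [map_add, LinearMap.add_apply, hp, hq, Polynomial.eval_add, add_smul]
  | monomial n a =>
    rw [Polynomial.aeval_monomial, Polynomial.eval_monomial, ← smul_smul, ← hpow]
    simp

lemma map_aeval_apply_of_monic {R M N : Type*} [CommRing R] [AddCommGroup M] [Module R M]
    [AddCommGroup N] (φ : M →+ N) (f : Module.End R M) (v : M) {p : Polynomial ℤ} (hp : p.Monic)
    (h : ∀ j < p.natDegree, φ ((f ^ j) v) = 0) :
    φ (Polynomial.aeval f p v) = φ ((f ^ p.natDegree) v) := by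
  rw [Polynomial.aeval_eq_sum_range, LinearMap.sum_apply, map_sum, Finset.sum_range_succ,
    Finset.sum_eq_zero fun j hj => ?_, zero_add, hp.coeff_natDegree, one_smul]
  rw [LinearMap.smul_apply, map_zsmul, h j (Finset.mem_range.mp hj), smul_zero]

lemma eulerY_X_pow_mul_X_pow (k ℓ : ℕ) :
    eulerY (X 0 ^ k * X 1 ^ ℓ) = (ℓ : ℤ) • (X 0 ^ k * X 1 ^ ℓ) := by
  rcases ℓ with _ | ℓ
  · simp [eulerY]
  · simp [eulerY]
    ring

lemma partialX_X_pow_mul_X_pow (k ℓ : ℕ) :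
    partialX (X 0 ^ k * X 1 ^ ℓ) = (k : ℤ) • (X 0 ^ (k - 1) * X 1 ^ ℓ) := by
  simp [partialX]
  ring

lemma partialX_pow_X_pow_mul_X_pow (ν k ℓ : ℕ) :
    (partialX ^ ν) (X 0 ^ k * X 1 ^ ℓ) = (k.descFactorial ν : ℤ) • (X 0 ^ (k - ν) * X 1 ^ ℓ) := by
  induction ν with
  | zero => simp
  | succ ν ih =>
    rw [pow_succ', Module.End.mul_apply, ih, map_zsmul, partialX_X_pow_mul_X_pow, smul_smul,
      Nat.descFactorial_succ, Nat.sub_sub]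
    push_cast
    ring_nf

lemma aeval_partialX_X_pow_mul_X_pow (p : Polynomial ℤ) (k ℓ : ℕ) :
    Polynomial.aeval partialX p (X 0 ^ k * X 1 ^ ℓ) = ∑ ν ∈ Finset.range (p.natDegree + 1),
      (p.coeff ν * k.descFactorial ν) • (X 0 ^ (k - ν) * X 1 ^ ℓ) := by
  rw [Polynomial.aeval_eq_sum_range, LinearMap.sum_apply]
  refine Finset.sum_congr rfl fun ν _ => ?_
  rw [LinearMap.smul_apply, partialX_pow_X_pow_mul_X_pow, smul_smul]

lemma aeval_delta_descPochhammer_X_pow_mul_X_pow (μ k ℓ : ℕ) :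
    Polynomial.aeval delta (descPochhammer ℤ μ) (X 0 ^ k * X 1 ^ ℓ) =
      ∑ ij ∈ antidiagonal μ, ∑ ν ∈ Finset.range (ij.1 + 1),
        (μ.choose ij.1 * ℓ.descFactorial ij.2 * (descPochhammer ℤ ij.1).coeff ν * k.descFactorial ν)
          • (X 0 ^ (k - ν) * X 1 ^ ℓ) := by
  rw [aeval_delta_descPochhammer, LinearMap.sum_apply]
  refine Finset.sum_congr rfl fun ij _ => ?_
  rw [Module.End.mul_apply, Module.End.mul_apply, Module.End.natCast_apply,
    aeval_apply_of_apply_eq_smul (eulerY_X_pow_mul_X_pow k ℓ), map_zsmul,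
    aeval_partialX_X_pow_mul_X_pow, descPochhammer_natDegree, Finset.smul_sum, Finset.smul_sum]
  refine Finset.sum_congr rfl fun ν _ => ?_
  rw [descPochhammer_eval_eq_descFactorial, smul_smul, ← Nat.cast_smul_eq_nsmul ℤ, smul_smul]
  ring_nf

lemma factorial_dvd_dlcm_pow_mul_expansion_coeff {μ K k i j ℓ : ℕ} (hij : i + j = μ) (hk : k < K)
    (ν : ℕ) : (μ.factorial : ℤ) ∣ dlcm μ ^ (K - 1) *
      (μ.choose i * ℓ.descFactorial j * (descPochhammer ℤ i).coeff ν * k.descFactorial ν) := by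
  rcases lt_or_ge k ν with hkν | hνk
  · simp [Nat.descFactorial_eq_zero_iff_lt.mpr hkν]
  have hi : (i.factorial : ℤ) ∣ dlcm μ ^ ν * (descPochhammer ℤ i).coeff ν :=
    (factorial_dvd_dlcm_pow_mul_coeff_descPochhammer i ν).trans <| mul_dvd_mul_right
      (pow_dvd_pow_of_dvd (Int.natCast_dvd_natCast.mpr (dlcm_dvd_dlcm (hij ▸ le_self_add))) ν) _
  have hj : (j.factorial : ℤ) ∣ ℓ.descFactorial j :=
    Int.natCast_dvd_natCast.mpr (Nat.factorial_dvd_descFactorial ℓ j)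
  have hμ : (μ.factorial : ℤ) = μ.choose i * i.factorial * j.factorial := by
    rw [← hij, ← Nat.choose_mul_factorial_mul_factorial le_self_add, Nat.add_sub_cancel_left]
    push_cast
    ring
  calc (μ.factorial : ℤ) = μ.choose i * i.factorial * j.factorial := hμ
    _ ∣ μ.choose i * (dlcm μ ^ ν * (descPochhammer ℤ i).coeff ν) * ℓ.descFactorial j :=
        mul_dvd_mul (mul_dvd_mul_left _ hi) hj
    _ ∣ _ := Dvd.intro (dlcm μ ^ (K - 1 - ν) * k.descFactorial ν) <| by
        rw [← Nat.add_sub_of_le (show ν ≤ K - 1 by omega), pow_add, Nat.add_sub_cancel_left]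
        ring

lemma smul_aeval_delta_descPochhammer_mem_range {μ K k : ℕ} (hk : k < K) (ℓ : ℕ) :
    ((dlcm μ : ℚ) ^ (K - 1) / μ.factorial) •
      Polynomial.aeval delta (descPochhammer ℤ μ) (X 0 ^ k * X 1 ^ ℓ) ∈
      (map (Int.castRingHom ℚ) : MvPolynomial (Fin 2) ℤ →+* _).range := by
  rw [aeval_delta_descPochhammer_X_pow_mul_X_pow, Finset.smul_sum]
  refine sum_mem fun ij hij => ?_
  rw [Finset.smul_sum]
  refine sum_mem fun ν _ => ?_
  obtain ⟨w, hw⟩ :=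
    factorial_dvd_dlcm_pow_mul_expansion_coeff (ℓ := ℓ) (mem_antidiagonal.mp hij) hk ν
  rw [← Int.cast_smul_eq_zsmul ℚ, smul_smul]
  have : (dlcm μ : ℚ) ^ (K - 1) / μ.factorial * ((μ.choose ij.1 * ℓ.descFactorial ij.2 *
      (descPochhammer ℤ ij.1).coeff ν * k.descFactorial ν : ℤ) : ℚ) = w := by
    have hw' := congrArg (Int.cast : ℤ → ℚ) hw
    push_cast at hw' ⊢
    field_simp
    linear_combination hw'
  rw [this, Int.cast_smul_eq_zsmul]
  exact zsmul_mem (RingHom.mem_range.mpr ⟨X 0 ^ (k - ν) * X 1 ^ ℓ, by simp⟩) w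

lemma HpolyQ_eq_sum (K L S' : ℕ) (h : S' + 1 = K * L) :
    HpolyQ K L S' h = ∑ j : Fin (S' + 1), ((-1) ^ (S' + (j : ℕ)) * m0Minor K L S' h j) •
      (X 0 ^ ((finProdFinEquiv.symm (Fin.cast h j)).1 : ℕ) *
        X 1 ^ ((finProdFinEquiv.symm (Fin.cast h j)).2 : ℕ)) := by
  rw [HpolyQ, Matrix.det_succ_row _ (Fin.last S')]
  refine Finset.sum_congr rfl fun j _ => ?_
  have hminor : ((Matrix.of fun i j : Fin (S' + 1) =>
      let kl : Fin K × Fin L := finProdFinEquiv.symm (Fin.cast h j)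
      if (i : ℕ) < S' then ((m0Entry (i : ℕ) (kl.1 : ℕ) (kl.2 : ℕ) : ℕ) : MvPolynomial (Fin 2) ℚ)
      else X 0 ^ (kl.1 : ℕ) * X 1 ^ (kl.2 : ℕ)).submatrix (Fin.last S').succAbove j.succAbove).det =
      m0Minor K L S' h j := by
    rw [m0Minor, ← eq_intCast (Int.castRingHom _), RingHom.map_det]
    congr 1
    ext s t
    simp [m0Int]
  rw [hminor]
  simp [zsmul_eq_mul]
  ring

lemma G1_mem_range {K L S' : ℕ} (h : S' + 1 = K * L) (μ : ℕ)
    (hg : Finset.gcd Finset.univ (m0Minor K L S' h) ≠ 0) :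
    G1 K L S' h μ ∈ (map (Int.castRingHom ℚ) : MvPolynomial (Fin 2) ℤ →+* _).range := by
  rw [G1, feldOp_eq_smul_aeval_descPochhammer, HpolyQ_eq_sum, map_sum, Finset.smul_sum,
    Finset.smul_sum]
  refine sum_mem fun j _ => ?_
  set g := Finset.gcd Finset.univ (m0Minor K L S' h)
  obtain ⟨e, he⟩ : g ∣ m0Minor K L S' h j := Finset.gcd_dvd (Finset.mem_univ j)
  have hscalar : (dlcm μ : ℚ) ^ (K - 1) * (g : ℚ)⁻¹ * (μ.factorial : ℚ)⁻¹ *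
      (((-1) ^ (S' + (j : ℕ)) * (g * e) : ℤ) : ℚ) =
      (((-1) ^ (S' + (j : ℕ)) * e : ℤ) : ℚ) * ((dlcm μ : ℚ) ^ (K - 1) / μ.factorial) := by
    push_cast
    field_simp
  rw [map_zsmul, he, ← Int.cast_smul_eq_zsmul ℚ, smul_smul, smul_smul, hscalar, ← smul_smul,
    Int.cast_smul_eq_zsmul]
  exact zsmul_mem (smul_aeval_delta_descPochhammer_mem_range
    (finProdFinEquiv.symm (Fin.cast h j)).1.isLt _) _

theorem stmt17_general (K L : ℕ) (S' : ℕ) (h : S' + 1 = K * L) (α β : ℂ) (μ : ℕ)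
    (hμne : aeval ![β, α] (deltaQ^[μ] (HpolyQ K L S' h)) ≠ 0)
    (hμmin : ∀ j < μ, aeval ![β, α] (deltaQ^[j] (HpolyQ K L S' h)) = 0) :
    (∃ g : MvPolynomial (Fin 2) ℤ, map (Int.castRingHom ℚ) g = G1 K L S' h μ) ∧
    aeval ![β, α] (G1 K L S' h μ) =
      ((dlcm μ : ℂ) ^ (K - 1) / (μ.factorial : ℂ)) *
        ((Finset.gcd Finset.univ (m0Minor K L S' h) : ℤ) : ℂ)⁻¹ *
        aeval ![β, α] (deltaQ^[μ] (HpolyQ K L S' h)) ∧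
    aeval ![β, α] (G1 K L S' h μ) ≠ 0 := by
  have hg : Finset.gcd Finset.univ (m0Minor K L S' h) ≠ 0 := by
    intro hg
    refine hμne ?_
    rw [HpolyQ_eq_sum, Finset.sum_eq_zero fun j _ => by simp [Finset.gcd_eq_zero_iff.mp hg j],
      ← coe_delta, Function.iterate_fixed (map_zero delta), map_zero]
  have hvalue : aeval ![β, α] (Polynomial.aeval delta (descPochhammer ℤ μ) (HpolyQ K L S' h)) =
      aeval ![β, α] (deltaQ^[μ] (HpolyQ K L S' h)) := by
    have := map_aeval_apply_of_monic (aeval ![β, α]).toAddMonoidHom delta (HpolyQ K L S' h)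
      (monic_descPochhammer ℤ μ)
    simp only [descPochhammer_natDegree, Module.End.pow_apply, coe_delta] at this
    exact this hμmin
  have hG1 : aeval ![β, α] (G1 K L S' h μ) =
      ((dlcm μ : ℂ) ^ (K - 1) / (μ.factorial : ℂ)) *
        ((Finset.gcd Finset.univ (m0Minor K L S' h) : ℤ) : ℂ)⁻¹ *
        aeval ![β, α] (deltaQ^[μ] (HpolyQ K L S' h)) := by
    rw [G1, feldOp_eq_smul_aeval_descPochhammer, map_smul, map_smul, hvalue, Rat.smul_def,
      Rat.smul_def]
    push_cast
    ring
  refine ⟨G1_mem_range h μ hg, hG1, ?_⟩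
  rw [hG1]
  refine mul_ne_zero (mul_ne_zero (div_ne_zero ?_ ?_) ?_) hμne <;>
    simp [dlcm_ne_zero, Nat.factorial_ne_zero, hg]

theorem stmt17 (K L : ℕ) (hK : 1 ≤ K) (hL : 2 ≤ L) (S' : ℕ) (h : S' + 1 = K * L)
    (α β : ℂ) (hαalg : IsAlgebraic ℚ α) (hβalg : IsAlgebraic ℚ β) (hα : α ≠ 0) (hβ : β ≠ 0)
    (μ : ℕ) (hμL : μ ≤ L - 2)
    (hμne : aeval ![β, α] (deltaQ^[μ] (HpolyQ K L S' h)) ≠ 0)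
    (hμmin : ∀ j < μ, aeval ![β, α] (deltaQ^[j] (HpolyQ K L S' h)) = 0) :
    (∃ g : MvPolynomial (Fin 2) ℤ, map (Int.castRingHom ℚ) g = G1 K L S' h μ) ∧
    aeval ![β, α] (G1 K L S' h μ) =
      ((dlcm μ : ℂ) ^ (K - 1) / (μ.factorial : ℂ)) *
        ((Finset.gcd Finset.univ (m0Minor K L S' h) : ℤ) : ℂ)⁻¹ *
        aeval ![β, α] (deltaQ^[μ] (HpolyQ K L S' h)) ∧
    aeval ![β, α] (G1 K L S' h μ) ≠ 0 :=
  stmt17_general K L S' h α β μ hμne hμmin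
end
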